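/- arXiv:2103.12875 — 6 statements merged into one kernel-verified Lean document; each statement's English description precedes it below -/
import Mathlib

section
/- For any Dyck vector v = (v_1, ..., v_n) (a sequence of nonnegative integers with v_1 = 0 and v_{i+1} ≤ v_i + 1 for all i < n), the deficit defc(v) := C(n,2) - (v_1 + ... + v_n) - dinv(v) equals the number of pairs (i,j) with 1 ≤ i < j ≤ n such that either v_i - v_j ≥ 2, or there exists k < i with v_k = v_i < v_j. -/
/-- dinv contribution of an entry coming from extended negative positions. -/
def negContrib (x : ℤ) : ℕ := (if x ≤ -1 then 1 else 0) + (if x ≤ -2 then 1 else 0)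

/-- The diagonal inversion statistic of a quasi-Dyck vector, with the
convention `v_k = k - 1` for `k ≤ 0`. -/
def dinv (v : List ℤ) : ℕ :=
  (Finset.univ.filter (fun p : Fin v.length × Fin v.length =>
      (p.1 : ℕ) < (p.2 : ℕ) ∧ (v.get p.1 - v.get p.2 = 0 ∨ v.get p.1 - v.get p.2 = 1))).card
  + (v.map negContrib).sum

def area (v : List ℤ) : ℤ := v.sum

def defc (v : List ℤ) : ℤ := (v.length.choose 2 : ℤ) - area v - (dinv v : ℤ)

/-- Quasi-Dyck vector: nonempty, starts with 0, consecutive increases ≤ 1. -/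
def IsQDV (v : List ℤ) : Prop :=
  v.head? = some 0 ∧ ∀ i : ℕ, i + 1 < v.length → v.getD (i + 1) 0 ≤ v.getD i 0 + 1

def IsDyck (v : List ℤ) : Prop := IsQDV v ∧ ∀ x ∈ v, 0 ≤ x

def stepRel (v w : List ℤ) : Prop := w = 0 :: v.map (· + 1)

def dyckEquiv : List ℤ → List ℤ → Prop := Relation.EqvGen stepRel

def dyckSetoid : Setoid (List ℤ) := Relation.EqvGen.setoid stepRel

abbrev DyckClass := Quotient dyckSetoid

def cls (v : List ℤ) : DyckClass := Quotient.mk dyckSetoid v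

/-- Reduced Dyck vector: a Dyck vector that is not `0 z⁺` for a Dyck vector `z`. -/
def IsReducedDV (v : List ℤ) : Prop :=
  IsDyck v ∧ ¬ ∃ z : List ℤ, IsDyck z ∧ v = 0 :: z.map (· + 1)

/-- The leader of a QDV: the largest `d` such that `v` starts with `0,1,...,d`. -/
def leader (v : List ℤ) : ℕ :=
  Nat.findGreatest (fun d => ∀ i, i ≤ d → v.getD i 0 = (i : ℤ)) (v.length - 1)

/-- Delete the leader symbol and append `leader - 1`. -/
def nuStep (v : List ℤ) : List ℤ :=
  v.take (leader v) ++ v.drop (leader v + 1) ++ [(leader v : ℤ) - 1]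

def nuApplies (v : List ℤ) : Prop :=
  IsQDV v ∧ 2 ≤ v.length ∧ 0 ≤ v.getD 1 0 ∧ (leader v : ℤ) ≤ v.getLastD 0 + 2

/-- The map NU₁ on Dyck classes, as a relation. -/
def nuClassRel (c c' : DyckClass) : Prop :=
  ∃ v, nuApplies v ∧ c = cls v ∧ c' = cls (nuStep v)

def stepOk (A : List ℤ) : Prop := ∀ i : ℕ, i + 1 < A.length → A.getD (i + 1) 0 ≤ A.getD i 0 + 1

def okA (A : List ℤ) : Prop :=
  A = [] ∨ ((∀ x ∈ A, x ≤ 2) ∧ 0 ≤ A.getLastD 0 ∧ stepOk A)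

def okB (B : List ℤ) : Prop :=
  B = [] ∨ ((∀ x ∈ B, x ≤ 2) ∧ B.headD 0 ≤ 1 ∧ -1 ≤ B.getLastD 0 ∧ stepOk B)

/-- The map NU₂ on Dyck classes, as a relation. -/
def nu2ClassRel (c c' : DyckClass) : Prop :=
  (∃ (h : ℕ) (A : List ℤ), 2 ≤ h ∧ okA A ∧
      c = cls ([0, 1] ++ List.replicate h (2:ℤ) ++ A ++ List.replicate (h - 1) (-1)) ∧
      c' = cls (List.replicate h (0:ℤ) ++ [1] ++ A ++ List.replicate h 1)) ∨
  (∃ (k : ℕ) (B : List ℤ), 1 ≤ k ∧ okB B ∧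
      c = cls ([0, 1] ++ List.replicate k (2:ℤ) ++ B ++ List.replicate k (-1)) ∧
      c' = cls (List.replicate (k + 1) (0:ℤ) ++ B ++ [0] ++ List.replicate k 1))

/-- The extended next-up map NU = NU₁ ∪ NU₂, as a relation on Dyck classes. -/
def nuRel (c c' : DyckClass) : Prop := nuClassRel c c' ∨ nu2ClassRel c c'

/-- An integer partition, given by its weakly decreasing list of positive parts. -/
def IsPartitionList (l : List ℕ) : Prop := l.Pairwise (· ≥ ·) ∧ ∀ x ∈ l, 0 < x

/-- `phi l n` = the QDV `(0 - λ_n, 1 - λ_{n-1}, ..., (n-1) - λ_1)`. -/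
def phi (l : List ℕ) (n : ℕ) : List ℤ :=
  List.ofFn (fun i : Fin n => (i : ℤ) - (l.getD (n - 1 - (i : ℕ)) 0 : ℤ))

def nuOne (g : List ℕ) : List ℕ :=
  (g.length + 1) :: (g.map (· - 1)).filter (fun x => 0 < x)

def ndOne (g : List ℕ) : List ℕ :=
  g.tail.map (· + 1) ++ List.replicate (g.headD 0 - g.length) 1

/-- dinv of a partition: number of cells with arm - leg ∈ {0,1}. -/
def pdinv (l : List ℕ) : ℕ :=
  (Finset.univ.filter (fun c : Fin l.length × Fin (l.headD 0) =>
    (c.2 : ℕ) < l.get c.1 ∧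
      (l.get c.1 - 1 - (c.2 : ℕ) =
          (Finset.univ.filter (fun i' : Fin l.length =>
            (c.1 : ℕ) < (i' : ℕ) ∧ (c.2 : ℕ) < l.get i')).card ∨
        l.get c.1 - 1 - (c.2 : ℕ) =
          (Finset.univ.filter (fun i' : Fin l.length =>
            (c.1 : ℕ) < (i' : ℕ) ∧ (c.2 : ℕ) < l.get i')).card + 1))).card

/-- `bWord [n_1, ..., n_r]` = `0 1^{n_1} 0 1^{n_2} ⋯ 0 1^{n_r}`. -/
def bWord (ns : List ℕ) : List ℤ :=
  (ns.map (fun m => (0:ℤ) :: List.replicate m 1)).flatten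

/-- `msize [n_1, ..., n_r] = Σ i·n_i`, the size of the partition `(r^{n_r},...,1^{n_1})`. -/
def msize (ns : List ℕ) : ℕ :=
  (List.zipWith (fun m i => m * i) ns (List.range' 1 ns.length)).sum

/-- The reduced Dyck vector `0 B_μ` of the tail initiator of a partition. -/
def tiVec (l : List ℕ) : List ℤ :=
  (0:ℤ) :: ((List.range' 1 (l.headD 0)).map
    (fun i => (0:ℤ) :: List.replicate (l.count i) (1:ℤ))).flatten

/-- `c` is the second-order tail initiator of the partition `l`: obtained from
`[0 B_μ]` by iterating the extended next-down map as long as possible. -/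
def IsTI2 (l : List ℕ) (c : DyckClass) : Prop :=
  Relation.ReflTransGen (fun x y => nuRel y x) (cls (tiVec l)) c ∧ ∀ d, ¬ nuRel d c

/-- `m` is the minimum triangle height of the Dyck class `c`. -/
def mindIs (c : DyckClass) (m : ℕ) : Prop :=
  ∃ v, IsReducedDV v ∧ c = cls v ∧ v.length = m

/-- Flagpole partition: `|μ| + 8 ≤ 2 mind(TI₂(μ))`. -/
def IsFlagpole (l : List ℕ) : Prop :=
  ∃ c m, IsTI2 l c ∧ mindIs c m ∧ l.sum + 8 ≤ 2 * m

/-- The Dyck vector `v(λ,a,ε) = 0 0 1 2^{a-ε} B_λ⁺ 1^ε`. -/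
def vLam (ns : List ℕ) (a ε : ℕ) : List ℤ :=
  [0, 0, 1] ++ List.replicate (a - ε) (2:ℤ) ++ (bWord ns).map (· + 1) ++ List.replicate ε 1

/-!
The pairs `i < j` of positions split into three classes: `v_i - v_j ∈ {0, 1}` (exactly the pairs
counted by `dinv`, since for `v ≥ 0` the extended positions `k ≤ 0` never contribute), the pairs
of the statement, and the pairs with `v_i < v_j` where `i` is the first occurrence of the value
`v_i`. As `v` starts at `0` and climbs by at most one at a time, every value in `[0, v_j)` first
occurs before `j`, so the last class contributes `v_j` pairs for each `j`, i.e. `area v` in total.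
-/

open Finset

theorem exists_le_eq_of_succ_le_add_one {f : ℕ → ℤ} {j : ℕ}
    (hf : ∀ i < j, f (i + 1) ≤ f i + 1) {t : ℤ} (h0 : f 0 ≤ t) (hj : t ≤ f j) :
    ∃ i ≤ j, f i = t := by
  induction j with
  | zero => exact ⟨0, le_rfl, le_antisymm h0 hj⟩
  | succ j ih =>
    rcases eq_or_lt_of_le hj with hjt | hjt
    · exact ⟨j + 1, le_rfl, hjt.symm⟩
    · have hstep := hf j j.lt_succ_self
      obtain ⟨i, hij, hi⟩ := ih (fun i hi => hf i (hi.trans j.lt_succ_self)) (by omega)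
      exact ⟨i, hij.trans j.le_succ, hi⟩

namespace DyckVector

variable {n : ℕ} (f : Fin n → ℤ)

def IsFirstOccurrence (i : Fin n) : Prop := ∀ k : Fin n, (k : ℕ) < i → f k ≠ f i

instance : DecidablePred (IsFirstOccurrence f) := fun _ => by
  unfold IsFirstOccurrence; infer_instance

def dinvPairs : Finset (Fin n × Fin n) :=
  {p | (p.1 : ℕ) < p.2 ∧ (f p.1 - f p.2 = 0 ∨ f p.1 - f p.2 = 1)}

def defcPairs : Finset (Fin n × Fin n) :=
  {p | (p.1 : ℕ) < p.2 ∧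
    (f p.2 + 2 ≤ f p.1 ∨ ∃ k : Fin n, (k : ℕ) < p.1 ∧ f k = f p.1 ∧ f p.1 < f p.2)}

def areaPairs : Finset (Fin n × Fin n) :=
  {p | (p.1 : ℕ) < p.2 ∧ f p.1 < f p.2 ∧ IsFirstOccurrence f p.1}

theorem card_dinvPairs_add_card_defcPairs_add_card_areaPairs :
    #(dinvPairs f) + #(defcPairs f) + #(areaPairs f) = n.choose 2 := by
  have hlt : #{p : Fin n × Fin n | (p.1 : ℕ) < p.2} = n.choose 2 := by
    simpa using card_product_filter_lt (s := (univ : Finset (Fin n)))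
  rw [← hlt, dinvPairs, defcPairs, areaPairs]
  simp only [card_filter, ← sum_add_distrib]
  refine sum_congr rfl fun ⟨i, j⟩ _ => ?_
  unfold IsFirstOccurrence
  grind

theorem card_filter_isFirstOccurrence (hnn : ∀ i, 0 ≤ f i)
    (hattain : ∀ j : Fin n, ∀ t, 0 ≤ t → t < f j → ∃ i : Fin n, (i : ℕ) < j ∧ f i = t)
    (j : Fin n) :
    #{i : Fin n | (i : ℕ) < j ∧ f i < f j ∧ IsFirstOccurrence f i} = (f j).toNat := by
  set s : Finset (Fin n) := {i | (i : ℕ) < j ∧ f i < f j ∧ IsFirstOccurrence f i}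
  have hinj : Set.InjOn f s := by
    intro i₁ h₁ i₂ h₂ heq
    simp only [s, coe_filter, mem_univ, true_and, Set.mem_ofPred_eq] at h₁ h₂
    rcases lt_trichotomy (i₁ : ℕ) i₂ with h | h | h
    · exact absurd heq (h₂.2.2 i₁ h)
    · exact Fin.ext h
    · exact absurd heq.symm (h₁.2.2 i₂ h)
  have himage : s.image f = Ico 0 (f j) := by
    ext t
    simp only [s, mem_image, mem_filter, mem_univ, true_and, mem_Ico]
    constructor
    · rintro ⟨i, ⟨-, hlt, -⟩, rfl⟩
      exact ⟨hnn i, hlt⟩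
    · rintro ⟨h0, htj⟩
      obtain ⟨i, hij, hi⟩ := hattain j t h0 htj
      obtain ⟨k, hk, hmin⟩ := exists_min_image {k : Fin n | f k = t} (fun k => (k : ℕ))
        ⟨i, by simpa using hi⟩
      simp only [mem_filter, mem_univ, true_and] at hk hmin
      refine ⟨k, ⟨(hmin i hi).trans_lt hij, hk ▸ htj, fun k' hk' hfk' => ?_⟩, hk⟩
      exact absurd (hmin k' (hfk'.trans hk)) (not_le.2 hk')
  rw [← card_image_of_injOn hinj, himage, Int.card_Ico, sub_zero]

theorem card_areaPairs (hnn : ∀ i, 0 ≤ f i)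
    (hattain : ∀ j : Fin n, ∀ t, 0 ≤ t → t < f j → ∃ i : Fin n, (i : ℕ) < j ∧ f i = t) :
    (#(areaPairs f) : ℤ) = ∑ j, f j := by
  have hfib : #(areaPairs f) =
      ∑ j : Fin n, #{i : Fin n | (i : ℕ) < j ∧ f i < f j ∧ IsFirstOccurrence f i} := by
    simp only [areaPairs, card_filter]
    exact Fintype.sum_prod_type_right _
  rw [hfib]
  push_cast
  refine sum_congr rfl fun j _ => ?_
  rw [card_filter_isFirstOccurrence f hnn hattain, Int.toNat_of_nonneg (hnn j)]

end DyckVector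

open DyckVector

theorem IsQDV.exists_lt_get_eq {v : List ℤ} (hv : IsQDV v) (j : Fin v.length) (t : ℤ)
    (h0 : 0 ≤ t) (ht : t < v.get j) : ∃ i : Fin v.length, (i : ℕ) < j ∧ v.get i = t := by
  have hget : ∀ i : Fin v.length, v.get i = v.getD i 0 := fun i => by simp
  have hhead : v.getD 0 0 = 0 := by
    obtain ⟨hhead, -⟩ := hv
    cases v with
    | nil => simp at hhead
    | cons a l => simpa using hhead
  obtain ⟨i, hij, hi⟩ := exists_le_eq_of_succ_le_add_one (f := fun i => v.getD i 0) (j := j)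
    (fun i hi => hv.2 i (by omega)) (hhead ▸ h0) ((hget j) ▸ ht.le)
  refine ⟨⟨i, by omega⟩, lt_of_le_of_ne hij ?_, (hget _).trans hi⟩
  rintro rfl
  exact ht.ne ((hget j).trans hi).symm

theorem dinv_eq_card_dinvPairs {v : List ℤ} (hv : ∀ x ∈ v, 0 ≤ x) :
    dinv v = #(dinvPairs v.get) := by
  have hneg : (v.map negContrib).sum = 0 := List.sum_eq_zero fun x hx => by
    obtain ⟨a, ha, rfl⟩ := List.mem_map.1 hx
    have := hv a ha
    simp only [negContrib]
    split_ifs <;> omega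
  rw [dinv, hneg, add_zero, dinvPairs]

theorem area_eq_sum_get (v : List ℤ) : area v = ∑ j, v.get j := by
  rw [area, ← List.sum_ofFn, List.ofFn_get]

theorem stmt0 (v : List ℤ) (hv : IsDyck v) :
    defc v = ((Finset.univ.filter (fun p : Fin v.length × Fin v.length =>
        (p.1 : ℕ) < (p.2 : ℕ) ∧ (v.get p.2 + 2 ≤ v.get p.1 ∨
          ∃ k : Fin v.length, (k : ℕ) < (p.1 : ℕ) ∧ v.get k = v.get p.1 ∧
            v.get p.1 < v.get p.2))).card : ℤ) := by
  have hnn : ∀ i, 0 ≤ v.get i := fun i => hv.2 _ (v.get_mem i)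
  have harea : area v = #(areaPairs v.get) := by
    rw [area_eq_sum_get, card_areaPairs v.get hnn hv.1.exists_lt_get_eq]
  have hchoose := card_dinvPairs_add_card_defcPairs_add_card_areaPairs v.get
  change defc v = (#(defcPairs v.get) : ℤ)
  rw [defc, dinv_eq_card_dinvPairs hv.2, harea, ← hchoose]
  push_cast
  ring
end

section
/- For all integers n, q ≥ 0, the Dyck vector consisting of three 0s, followed by a 1, followed by n copies of 2, followed by q copies of 1 (i.e., 0,0,0,1,2^n,1^q) has deficit equal to 2(n + q + 1). -/
/-!
Appending an entry `x` to a Dyck vector `v` raises the deficit by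
`|v| - x - #{y ∈ v | y - x ∈ {0, 1}}` (less the contribution of `x` to the negative-index part of
`dinv`, which vanishes for `x ≥ 0`). Appending further copies of `x` leaves this increment
unchanged, since each copy adds one entry and one partner. For `0 0 0 1 2ⁿ 1^q` every appended
entry therefore adds `2` to `defc (0 0 0 1) = 2`.
-/

open Finset

def dinvPairs {m : ℕ} (f : Fin m → ℤ) : ℕ :=
  (univ.filter (fun p : Fin m × Fin m =>
      (p.1 : ℕ) < (p.2 : ℕ) ∧ (f p.1 - f p.2 = 0 ∨ f p.1 - f p.2 = 1))).card

def dinvPartnerCount (v : List ℤ) (x : ℤ) : ℕ := v.countP (fun y => y - x = 0 ∨ y - x = 1)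

lemma dinv_eq_dinvPairs (v : List ℤ) : dinv v = dinvPairs v.get + (v.map negContrib).sum := rfl

lemma dinvPairs_comp_cast {m m' : ℕ} (h : m = m') (f : Fin m' → ℤ) :
    dinvPairs (f ∘ Fin.cast h) = dinvPairs f := by
  subst h; rfl

lemma dinvPairs_succ {m : ℕ} (f : Fin (m + 1) → ℤ) :
    dinvPairs f = dinvPairs (f ∘ Fin.castSucc) +
      #{i : Fin m | f i.castSucc - f (Fin.last m) = 0 ∨ f i.castSucc - f (Fin.last m) = 1} := by
  simp only [dinvPairs, card_filter, Fintype.sum_prod_type, Fin.sum_univ_castSucc,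
    Fin.val_castSucc, Fin.val_last, Function.comp_apply, sum_add_distrib]
  simp

lemma card_filter_get_eq_countP {α : Type*} (v : List α) (p : α → Prop) [DecidablePred p] :
    #{i : Fin v.length | p (v.get i)} = v.countP (fun y => p y) := by
  induction v with
  | nil => rfl
  | cons a v ih =>
    refine (Fin.card_filter_univ_succ (n := v.length) _).trans ?_
    rw [List.countP_cons, ← ih]
    by_cases ha : p a <;> simp [ha]

lemma dinv_append_singleton (v : List ℤ) (x : ℤ) :
    dinv (v ++ [x]) = dinv v + dinvPartnerCount v x + negContrib x := by
  have hlen : v.length + 1 = (v ++ [x]).length := by simp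
  have hinit (i : Fin v.length) : (v ++ [x]).get (Fin.cast hlen i.castSucc) = v.get i := by
    simp [List.getElem_append_left]
  have hlast : (v ++ [x]).get (Fin.cast hlen (Fin.last _)) = x := by simp
  have hpairs := dinvPairs_succ ((v ++ [x]).get ∘ Fin.cast hlen)
  rw [dinvPairs_comp_cast, show ((v ++ [x]).get ∘ Fin.cast hlen) ∘ Fin.castSucc = v.get from
    funext hinit] at hpairs
  simp only [Function.comp_apply, hinit, hlast] at hpairs
  rw [card_filter_get_eq_countP v (fun y => y - x = 0 ∨ y - x = 1)] at hpairs
  simp only [dinv_eq_dinvPairs, hpairs, dinvPartnerCount, List.map_append, List.sum_append,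
    List.map_singleton, List.sum_singleton]
  ring

lemma defc_append_singleton (v : List ℤ) (x : ℤ) :
    defc (v ++ [x]) = defc v + v.length - x - dinvPartnerCount v x - negContrib x := by
  simp only [defc, area, dinv_append_singleton, List.length_append, List.length_singleton,
    Nat.choose_succ_succ', Nat.choose_one_right, List.sum_append, List.sum_singleton]
  push_cast
  ring

lemma dinvPartnerCount_append_replicate_self (v : List ℤ) (x : ℤ) (k : ℕ) :
    dinvPartnerCount (v ++ List.replicate k x) x = dinvPartnerCount v x + k := by
  simp [dinvPartnerCount, List.countP_replicate]

lemma defc_append_replicate (v : List ℤ) (x : ℤ) (k : ℕ) :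
    defc (v ++ List.replicate k x) =
      defc v + k * (v.length - x - dinvPartnerCount v x - negContrib x) := by
  induction k with
  | zero => simp
  | succ k ih =>
    rw [List.replicate_succ', ← List.append_assoc, defc_append_singleton, ih,
      dinvPartnerCount_append_replicate_self, List.length_append, List.length_replicate]
    push_cast
    ring

theorem stmt1 (n q : ℕ) :
    defc ([0, 0, 0, 1] ++ List.replicate n (2:ℤ) ++ List.replicate q (1:ℤ))
      = 2 * ((n : ℤ) + (q : ℤ) + 1) := by
  have hbase : defc [0, 0, 0, 1] = 2 := by decide
  have hpartners : dinvPartnerCount ([0, 0, 0, 1] ++ List.replicate n 2) 1 = n + 1 := by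
    simp [dinvPartnerCount, List.countP_replicate]
  rw [defc_append_replicate, defc_append_replicate, hbase, hpartners]
  norm_num [dinvPartnerCount, negContrib]
  ring
end

section
/- Let v = 0 0 A 0 B 1 2^n 1^q be a Dyck vector where n ≥ 1, q ≥ 0, and A, B are (possibly empty) lists. Then defc(v) ≥ 2·len(A) + 2·len(B) + 2(n+q) + 1. -/
/-!
For a Dyck vector all entries are nonnegative, so `defc v` is the number of pairs `i < j` with
`v i - v j ∉ {0, 1}` minus the area. Count these pairs by their right end: an entry `x ≥ 1`
of `A` or `B` pairs with every earlier zero and, because increases are at most one, with an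
earlier occurrence of each of `1, …, x - 1`; the middle `0` pairs with the entries of `A` outside
`{0, 1}`; the `1` after `B` with the three zeros and the entries outside `{1, 2}`; each `2` with
the zeros, the `1` and the entries outside `{2, 3}`; each final `1` as the first one. Subtracting
the area leaves at least `2` for every entry of `A`, `B`, `2^n`, `1^q`, and at least one more.
-/

open Finset

section PairCount

variable {α : Type*} (r : α → α → Prop) [DecidableRel r]

def pairCount : List α → ℕ
  | [] => 0
  | x :: l => l.countP (r x ·) + pairCount l

theorem countP_ofFn {n : ℕ} (p : α → Prop) [DecidablePred p] (f : Fin n → α) :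
    (List.ofFn f).countP (p ·) = #{i | p (f i)} := by
  induction n with
  | zero => simp
  | succ n ih =>
    rw [List.ofFn_succ, List.countP_cons, ih, card_filter, card_filter, Fin.sum_univ_succ,
      add_comm]
    simp

theorem card_filter_lt_eq_pairCount_ofFn {n : ℕ} (f : Fin n → α) :
    #{p : Fin n × Fin n | (p.1 : ℕ) < p.2 ∧ r (f p.1) (f p.2)} = pairCount r (List.ofFn f) := by
  induction n with
  | zero => simp [pairCount]
  | succ n ih =>
    rw [List.ofFn_succ, pairCount, ← ih, countP_ofFn]
    simp only [card_filter, Fintype.sum_prod_type, Fin.sum_univ_succ]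
    simp

theorem pairCount_append (l₁ l₂ : List α) :
    pairCount r (l₁ ++ l₂) =
      pairCount r l₁ + pairCount r l₂ + (l₂.map fun y => l₁.countP (r · y)).sum := by
  induction l₁ with
  | nil => simp [pairCount]
  | cons x l ih =>
    have hcross : (l₂.map fun y => (x :: l).countP (r · y)).sum =
        (l₂.map fun y => l.countP (r · y)).sum + l₂.countP (r x ·) := by
      clear ih
      induction l₂ with
      | nil => simp
      | cons y l₂ ih =>
        simp only [List.map_cons, List.sum_cons, List.countP_cons] at ih ⊢
        omega
    rw [List.cons_append, pairCount, pairCount, ih, List.countP_append, hcross]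
    ring

theorem pairCount_append_singleton (l : List α) (y : α) :
    pairCount r (l ++ [y]) = pairCount r l + l.countP (r · y) := by
  simp [pairCount_append, pairCount]

theorem pairCount_add_pairCount_not (l : List α) :
    pairCount r l + pairCount (fun a b => ¬r a b) l = l.length.choose 2 := by
  induction l with
  | nil => rfl
  | cons x l ih =>
    rw [pairCount, pairCount, List.length_cons, Nat.choose_succ_succ, Nat.choose_one_right, ← ih,
      List.length_eq_countP_add_countP (r x ·)]
    simp only [decide_not, decide_eq_true_eq]
    ring

end PairCount

abbrev DinvPair (a b : ℤ) : Prop := a - b = 0 ∨ a - b = 1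

abbrev NonDinvPair (a b : ℤ) : Prop := ¬DinvPair a b

theorem dinv_eq_pairCount {v : List ℤ} (hv : ∀ x ∈ v, 0 ≤ x) : dinv v = pairCount DinvPair v := by
  have hneg : (v.map negContrib).sum = 0 := by
    refine List.sum_eq_zero fun c hc => ?_
    obtain ⟨x, hx, rfl⟩ := List.mem_map.1 hc
    have := hv x hx
    simp only [negContrib]
    split_ifs <;> omega
  have hcard := card_filter_lt_eq_pairCount_ofFn DinvPair v.get
  rw [List.ofFn_get] at hcard
  rw [dinv, hneg, add_zero, ← hcard]

theorem defc_eq_pairCount_sub_area {v : List ℤ} (hv : ∀ x ∈ v, 0 ≤ x) :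
    defc v = pairCount NonDinvPair v - area v := by
  rw [defc, dinv_eq_pairCount hv, ← pairCount_add_pairCount_not DinvPair v]
  push_cast
  ring

theorem IsQDV.isChain {v : List ℤ} (hv : IsQDV v) : v.IsChain (fun a b => b ≤ a + 1) :=
  List.isChain_iff_getElem.2 fun i hi => by
    simpa [List.getElem?_eq_getElem hi, List.getElem?_eq_getElem (Nat.lt_of_succ_lt hi)]
      using hv.2 i hi

theorem mem_of_isChain_of_le_of_le {l : List ℤ} (hl : l.IsChain (fun a b => b ≤ a + 1))
    {a b m : ℤ} (ha : l.head? = some a) (hb : l.getLast? = some b) (ham : a ≤ m) (hmb : m ≤ b) :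
    m ∈ l := by
  induction l generalizing a with
  | nil => simp at ha
  | cons x l ih =>
    obtain rfl : x = a := by simpa using ha
    rcases eq_or_lt_of_le ham with rfl | hxm
    · exact List.mem_cons_self
    cases l with
    | nil => simp at hb; omega
    | cons y l =>
      rw [List.isChain_cons_cons] at hl
      exact List.mem_cons_of_mem _ (ih hl.2 rfl (by simpa using hb) (by omega))

/-- Since increases are at most one, each of the values `1, …, x - 1` occurs in `u`; together
with the zeros these are entries `y < x`, so `y - x ∉ {0, 1}`. -/
theorem count_zero_add_sub_one_le_countP {u : List ℤ} (hu : u.IsChain (fun a b => b ≤ a + 1))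
    (h0 : u.head? = some 0) {b x : ℤ} (hb : u.getLast? = some b) (hx : 1 ≤ x) (hxb : x ≤ b + 1) :
    (u.count 0 : ℤ) + (x - 1) ≤ u.countP (NonDinvPair · x) := by
  set w := u.filter (· < x)
  have hzeros : w.count 0 = u.count 0 := List.count_filter (by simp; omega)
  have hsub : Icc 1 (x - 1) ⊆ (w.filter (· ≠ 0)).toFinset := fun m hm => by
    obtain ⟨h1m, hmx⟩ := mem_Icc.1 hm
    have hmu : m ∈ u := mem_of_isChain_of_le_of_le hu h0 hb (by omega) (by omega)
    simpa [w, hmu] using ⟨by omega, by omega⟩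
  have hvalues : x - 1 ≤ (w.countP (· ≠ 0) : ℤ) := by
    have := (card_le_card hsub).trans (List.toFinset_card_le _)
    rw [Int.card_Icc, ← List.countP_eq_length_filter] at this
    omega
  have hlt : w.length ≤ u.countP (NonDinvPair · x) := by
    rw [← List.countP_eq_length_filter]
    exact List.countP_mono_left fun y _ hy => by simp at hy ⊢; omega
  have hsplit : w.length = w.count 0 + w.countP (· ≠ 0) := by
    rw [List.count_eq_countP, List.length_eq_countP_add_countP (· == 0)]
    simp
  omega

theorem pairCount_add_sum_le_pairCount_append {P l : List ℤ}
    (hc : (P ++ l).IsChain (fun a b => b ≤ a + 1)) (h0 : P.head? = some 0) {z : ℕ}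
    (hz : z ≤ P.count 0) :
    (pairCount NonDinvPair P : ℤ) + (l.map fun x : ℤ => if 1 ≤ x then x - 1 + z else 0).sum ≤
      pairCount NonDinvPair (P ++ l) := by
  induction l using List.reverseRecOn with
  | nil => simp
  | append_singleton l x ih =>
    rw [← List.append_assoc] at hc ⊢
    obtain ⟨hcl, -, hlast⟩ := List.isChain_append.1 hc
    have hx : (if 1 ≤ x then x - 1 + z else 0) ≤ ((P ++ l).countP (NonDinvPair · x) : ℤ) := by
      split_ifs with h1x
      · have hne : P ++ l ≠ [] := by
          rw [Ne, List.append_eq_nil_iff]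
          rintro ⟨rfl, -⟩
          simp at h0
        obtain ⟨b, hb⟩ : ∃ b, (P ++ l).getLast? = some b := ⟨_, List.getLast?_eq_some_getLast hne⟩
        have hhead : (P ++ l).head? = some 0 := by simp [List.head?_append, h0]
        have := count_zero_add_sub_one_le_countP hcl hhead hb h1x (hlast b hb x rfl)
        rw [List.count_append] at this
        push_cast at this
        omega
      · positivity
    rw [pairCount_append_singleton, List.map_append, List.sum_append, List.map_singleton,
      List.sum_singleton]
    push_cast
    linarith [ih hcl]

/-- An entry `x ≥ 1` of `A` closes non-dinv pairs with `x - 1` smaller values and the two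
leading zeros; in `B` also with the middle zero. Against the later entries `0`, `1`, `2` this
leaves every entry of either block with at least `x + 2`. -/
theorem two_mul_length_add_sum_le_first_block {A : List ℤ} (hA : ∀ x ∈ A, 0 ≤ x) :
    2 * (A.length : ℤ) + A.sum ≤ (A.map fun x : ℤ => if 1 ≤ x then x - 1 + 2 else 0).sum +
      A.countP (NonDinvPair · 0) + A.countP (NonDinvPair · 1) + A.countP (NonDinvPair · 2) := by
  induction A with
  | nil => simp
  | cons x A ih =>
    have hx := hA x List.mem_cons_self
    have := ih fun y hy => hA y (List.mem_cons_of_mem x hy)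
    simp only [List.map_cons, List.sum_cons, List.length_cons, List.countP_cons]
    push_cast
    split_ifs <;> simp_all <;> omega

theorem two_mul_length_add_sum_le_second_block {B : List ℤ} (hB : ∀ x ∈ B, 0 ≤ x) :
    2 * (B.length : ℤ) + B.sum ≤ (B.map fun x : ℤ => if 1 ≤ x then x - 1 + 3 else 0).sum +
      B.countP (NonDinvPair · 1) + B.countP (NonDinvPair · 2) := by
  induction B with
  | nil => simp
  | cons x B ih =>
    have hx := hB x List.mem_cons_self
    have := ih fun y hy => hB y (List.mem_cons_of_mem x hy)
    simp only [List.map_cons, List.sum_cons, List.length_cons, List.countP_cons]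
    push_cast
    split_ifs <;> simp_all <;> omega

theorem le_pairCount_nonDinvPair (A B : List ℤ) (n q : ℕ)
    (hc : ([0, 0] ++ A ++ [0] ++ B).IsChain (fun a b => b ≤ a + 1)) :
    (A.map fun x : ℤ => if 1 ≤ x then x - 1 + 2 else 0).sum + A.countP (NonDinvPair · 0) +
        (B.map fun x : ℤ => if 1 ≤ x then x - 1 + 3 else 0).sum +
        (3 + A.countP (NonDinvPair · 1) + B.countP (NonDinvPair · 1) : ℕ) +
        n * (4 + A.countP (NonDinvPair · 2) + B.countP (NonDinvPair · 2) : ℕ) +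
        q * (3 + A.countP (NonDinvPair · 1) + B.countP (NonDinvPair · 1) : ℕ) ≤
      (pairCount NonDinvPair
        ([0, 0] ++ A ++ [0] ++ B ++ [1] ++ List.replicate n 2 ++ List.replicate q 1) : ℤ) := by
  have hA := pairCount_add_sum_le_pairCount_append (P := [0, 0]) (l := A)
    (hc.prefix (by simp)) rfl (z := 2) (by simp)
  have hzero := pairCount_append_singleton NonDinvPair ([0, 0] ++ A) 0
  have hB := pairCount_add_sum_le_pairCount_append (P := [0, 0] ++ A ++ [0]) (l := B) hc
    (by simp) (z := 3) (by simp)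
  have hone := pairCount_append_singleton NonDinvPair ([0, 0] ++ A ++ [0] ++ B) 1
  have htail := pairCount_append NonDinvPair ([0, 0] ++ A ++ [0] ++ B ++ [1])
    (List.replicate n 2 ++ List.replicate q 1)
  have hN0 : pairCount NonDinvPair [0, 0] = 0 := rfl
  simp +decide only [List.countP_append, List.countP_cons, List.countP_nil, List.map_append,
    List.map_replicate, List.sum_append, List.sum_replicate, smul_eq_mul, List.append_assoc,
    hN0, Nat.cast_ofNat] at hA hzero hB hone htail ⊢
  zify at hzero hone htail
  push_cast at *
  linarith

theorem stmt3 (A B : List ℤ) (n q : ℕ) (hn : 1 ≤ n)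
    (hv : IsDyck ([0, 0] ++ A ++ [0] ++ B ++ [1]
        ++ List.replicate n (2:ℤ) ++ List.replicate q (1:ℤ))) :
    2 * (A.length : ℤ) + 2 * (B.length : ℤ) + 2 * ((n : ℤ) + (q : ℤ)) + 1
      ≤ defc ([0, 0] ++ A ++ [0] ++ B ++ [1]
          ++ List.replicate n (2:ℤ) ++ List.replicate q (1:ℤ)) := by
  obtain ⟨hqdv, hnonneg⟩ := hv
  have hN := le_pairCount_nonDinvPair A B n q (hqdv.isChain.prefix (by simp))
  have hA := two_mul_length_add_sum_le_first_block (A := A) fun x hx => hnonneg x (by simp [hx])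
  have hB := two_mul_length_add_sum_le_second_block (B := B) fun x hx => hnonneg x (by simp [hx])
  have harea : area ([0, 0] ++ A ++ [0] ++ B ++ [1] ++ List.replicate n 2 ++ List.replicate q 1) =
      A.sum + B.sum + 1 + 2 * n + q := by
    simp only [area, List.sum_append, List.sum_cons, List.sum_nil, List.sum_replicate,
      nsmul_eq_mul]
    ring
  rw [defc_eq_pairCount_sub_area hnonneg, harea]
  have hn2 : ((A.countP (NonDinvPair · 2) + B.countP (NonDinvPair · 2) : ℕ) : ℤ) ≤
      n * (A.countP (NonDinvPair · 2) + B.countP (NonDinvPair · 2) : ℕ) :=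
    le_mul_of_one_le_left (by positivity) (by exact_mod_cast hn)
  push_cast at hN hn2
  nlinarith
end

section
/- The map sending each integer partition λ to the set {φ_n(λ) : n > ℓ(λ)}, where φ_n(λ) = (0-λ_n, 1-λ_{n-1}, ..., (n-1)-λ_1), is a bijection from the set of all integer partitions onto the set of all equivalence classes of quasi-Dyck vectors under the equivalence generated by v ~ 0 v⁺. -/
/-- `raise v = 0 v⁺`, so that `stepRel v w` unfolds to `w = raise v`. -/
def raise (v : List ℤ) : List ℤ := 0 :: v.map (· + 1)

theorem Relation.eqvGen_eq_apply_iff {α : Type*} (f : α → α) {a b : α} :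
    Relation.EqvGen (fun x y => y = f x) a b ↔ ∃ m n, f^[m] a = f^[n] b := by
  constructor
  · intro h
    induction h with
    | rel x y hxy => exact ⟨1, 0, hxy.symm⟩
    | refl x => exact ⟨0, 0, rfl⟩
    | symm x y _ ih =>
      obtain ⟨m, n, h⟩ := ih
      exact ⟨n, m, h.symm⟩
    | trans x y z _ _ ih₁ ih₂ =>
      obtain ⟨m, n, h₁⟩ := ih₁
      obtain ⟨p, q, h₂⟩ := ih₂
      refine ⟨p + m, n + q, ?_⟩
      calc f^[p + m] x = f^[p] (f^[n] y) := by rw [Function.iterate_add_apply, h₁]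
        _ = f^[n] (f^[p] y) := by
          rw [← Function.iterate_add_apply, Nat.add_comm, Function.iterate_add_apply]
        _ = f^[n + q] z := by rw [h₂, Function.iterate_add_apply]
  · rintro ⟨m, n, h⟩
    have key : ∀ x k, Relation.EqvGen (fun x y => y = f x) x (f^[k] x) := by
      intro x k
      induction k with
      | zero => exact .refl x
      | succ k ih =>
        exact .trans _ _ _ ih (.rel _ _ (Function.iterate_succ_apply' f k x))
    exact .trans _ _ _ (h ▸ key a m) (.symm _ _ (key b n))

theorem cls_eq_cls_iff {v w : List ℤ} :
    cls v = cls w ↔ ∃ m n, raise^[m] v = raise^[n] w :=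
  Quotient.eq.trans (Relation.eqvGen_eq_apply_iff raise)

@[simp]
theorem length_phi (l : List ℕ) (n : ℕ) : (phi l n).length = n := by
  simp [phi]

theorem getElem_phi (l : List ℕ) (n : ℕ) {i : ℕ} (h : i < (phi l n).length) :
    (phi l n)[i] = (i : ℤ) - (l.getD (n - 1 - i) 0 : ℤ) := by
  simp [phi]

theorem phi_succ {l : List ℕ} {n : ℕ} (h : l.length ≤ n) :
    phi l (n + 1) = raise (phi l n) := by
  apply List.ext_getElem (by simp [raise])
  intro i h₁ h₂
  rw [getElem_phi]
  rcases i with _ | i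
  · simp [raise, List.getElem?_eq_none h]
  · simp only [raise, List.getElem_cons_succ, List.getElem_map, getElem_phi]
    rw [show n + 1 - 1 - (i + 1) = n - 1 - i by omega]
    push_cast
    ring

theorem iterate_raise_phi {l : List ℕ} {n : ℕ} (h : l.length ≤ n) (m : ℕ) :
    raise^[m] (phi l n) = phi l (n + m) := by
  induction m with
  | zero => rfl
  | succ k ih =>
    rw [Function.iterate_succ_apply', ih, ← phi_succ (by omega), Nat.add_assoc]

theorem cls_phi_of_length_lt {l : List ℕ} {n : ℕ} (h : l.length < n) :
    cls (phi l n) = cls (phi l (l.length + 1)) :=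
  cls_eq_cls_iff.mpr ⟨0, n - (l.length + 1), by
    rw [Function.iterate_zero_apply, iterate_raise_phi (by omega),
      Nat.add_sub_cancel' (h : l.length + 1 ≤ n)]⟩

theorem getD_antitone_of_pairwise {l : List ℕ} (h : l.Pairwise (· ≥ ·)) {a b : ℕ}
    (hab : a ≤ b) : l.getD b 0 ≤ l.getD a 0 := by
  rcases lt_or_ge b l.length with hb | hb
  · rw [List.getD_eq_getElem _ _ hb, List.getD_eq_getElem _ _ (hab.trans_lt hb)]
    rcases hab.eq_or_lt with rfl | hlt
    · exact le_rfl
    · exact List.pairwise_iff_getElem.mp h a b _ hb hlt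
  · simp [List.getElem?_eq_none hb]

theorem isQDV_phi {l : List ℕ} (h : l.Pairwise (· ≥ ·)) {n : ℕ} (hn : l.length < n) :
    IsQDV (phi l n) := by
  obtain ⟨k, rfl⟩ : ∃ k, n = k + 1 := ⟨n - 1, by omega⟩
  refine ⟨?_, fun i hi => ?_⟩
  · simp [phi, List.ofFn_succ, List.getElem?_eq_none (show l.length ≤ k by omega)]
  · simp only [length_phi] at hi
    rw [List.getD_eq_getElem _ _ (by simpa using hi),
      List.getD_eq_getElem _ _ (by rw [length_phi]; omega), getElem_phi, getElem_phi]
    have : l.getD (k - i) 0 ≤ l.getD (k - (i + 1)) 0 := getD_antitone_of_pairwise h (by omega)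
    push_cast
    omega

theorem getD_eq_of_phi_eq {l l' : List ℕ} {n : ℕ} (hl : l.length ≤ n) (hl' : l'.length ≤ n)
    (h : phi l n = phi l' n) (j : ℕ) : l.getD j 0 = l'.getD j 0 := by
  rcases lt_or_ge j n with hj | hj
  · have := congrFun (List.ofFn_inj.mp h) ⟨n - 1 - j, by omega⟩
    simpa [show n - 1 - (n - 1 - j) = j by omega] using this
  · rw [List.getD_eq_default _ _ (by omega), List.getD_eq_default _ _ (by omega)]

theorem List.eq_of_getD_eq_of_pos {l l' : List ℕ} (hl : ∀ x ∈ l, 0 < x)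
    (hl' : ∀ x ∈ l', 0 < x) (h : ∀ j, l.getD j 0 = l'.getD j 0) : l = l' := by
  have getD_ne_zero {l : List ℕ} (hl : ∀ x ∈ l, 0 < x) {j : ℕ} (hj : j < l.length) :
      l.getD j 0 ≠ 0 := by
    rw [List.getD_eq_getElem _ _ hj]
    exact (hl _ (List.getElem_mem hj)).ne'
  have hlen : l.length = l'.length := by
    by_contra hne
    rcases Nat.lt_or_gt_of_ne hne with hlt | hlt
    · exact getD_ne_zero hl' hlt (by rw [← h, List.getD_eq_default _ _ le_rfl])
    · exact getD_ne_zero hl hlt (by rw [h, List.getD_eq_default _ _ le_rfl])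
  refine List.ext_getElem hlen fun j h₁ h₂ => ?_
  simpa only [List.getD_eq_getElem _ _ h₁, List.getD_eq_getElem _ _ h₂] using h j

theorem exists_isPartitionList_getD_eq {F : ℕ → ℕ} (hF : Antitone F) {N : ℕ} (hN : F N = 0) :
    ∃ l, IsPartitionList l ∧ l.length ≤ N ∧ ∀ j, l.getD j 0 = F j := by
  classical
  have hex : ∃ k, F k = 0 := ⟨N, hN⟩
  set K := Nat.find hex
  have hpos : ∀ j < K, 0 < F j := fun j hj => Nat.pos_of_ne_zero (Nat.find_min hex hj)
  refine ⟨(List.range K).map F, ⟨?_, ?_⟩, ?_, fun j => ?_⟩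
  · exact List.pairwise_map.mpr (List.pairwise_lt_range.imp fun hij => hF hij.le)
  · simpa using hpos
  · rw [List.length_map, List.length_range]
    exact Nat.find_min' hex hN
  · rcases lt_or_ge j K with hj | hj
    · simp [List.getElem?_range hj]
    · rw [List.getD_eq_default _ _ (by simpa using hj)]
      exact (Nat.le_zero.mp (Nat.find_spec hex ▸ hF hj)).symm

namespace IsQDV

variable {v : List ℤ} (hv : IsQDV v)
include hv

theorem getD_zero : v.getD 0 0 = 0 := by
  obtain ⟨hhead, -⟩ := hv
  rcases v with _ | ⟨a, t⟩
  · rfl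
  · simpa using hhead

theorem sub_getD_le_sub_getD {i k : ℕ} (hik : i ≤ k) (hk : k < v.length) :
    (i : ℤ) - v.getD i 0 ≤ k - v.getD k 0 := by
  induction k, hik using Nat.le_induction with
  | base => exact le_rfl
  | succ k _ ih =>
    have := hv.2 k hk
    have := ih (by omega)
    push_cast
    omega

theorem getD_le (i : ℕ) : v.getD i 0 ≤ i := by
  rcases lt_or_ge i v.length with hi | hi
  · have := hv.sub_getD_le_sub_getD (Nat.zero_le i) hi
    rw [hv.getD_zero] at this
    push_cast at this
    omega
  · simp [List.getElem?_eq_none hi]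

/-- `λ_j = (n - 1 - j) - v_{n-1-j}` inverts `φ_n`; the QDV condition makes it a partition. -/
theorem exists_phi_eq : ∃ l, IsPartitionList l ∧ l.length < v.length ∧ phi l v.length = v := by
  set n := v.length
  have hn : 0 < n := List.length_pos_iff.mpr (by rintro rfl; simp [IsQDV] at hv)
  set F : ℕ → ℕ := fun j => (((n - 1 - j : ℕ) : ℤ) - v.getD (n - 1 - j) 0).toNat
  have hF : ∀ j, (F j : ℤ) = ((n - 1 - j : ℕ) : ℤ) - v.getD (n - 1 - j) 0 := fun j =>
    Int.toNat_of_nonneg (sub_nonneg.mpr (hv.getD_le _))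
  have hanti : Antitone F := fun j j' hjj' =>
    Int.toNat_le_toNat (hv.sub_getD_le_sub_getD (by omega) (by omega))
  have hlast : F (n - 1) = 0 := by
    simp only [F, Nat.sub_self, hv.getD_zero]
    rfl
  obtain ⟨l, hl, hlen, hgetD⟩ := exists_isPartitionList_getD_eq hanti hlast
  refine ⟨l, hl, by omega, List.ext_getElem (length_phi l n) fun i h₁ h₂ => ?_⟩
  rw [getElem_phi, hgetD, hF, show n - 1 - (n - 1 - i) = i by rw [length_phi] at h₁; omega,
    List.getD_eq_getElem _ _ h₂]
  ring

end IsQDV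

theorem stmt6 :
    Set.BijOn (fun l : List ℕ => cls (phi l (l.length + 1)))
      {l : List ℕ | IsPartitionList l}
      {c : DyckClass | ∃ v, IsQDV v ∧ c = cls v} := by
  refine ⟨fun l hl => ⟨_, isQDV_phi hl.1 (Nat.lt_succ_self _), rfl⟩, ?_, ?_⟩
  · intro l hl l' hl' h
    obtain ⟨m, m', hmm'⟩ := cls_eq_cls_iff.mp h
    rw [iterate_raise_phi le_self_add, iterate_raise_phi le_self_add] at hmm'
    have hN := congrArg List.length hmm'
    simp only [length_phi] at hN
    rw [← hN] at hmm'
    exact List.eq_of_getD_eq_of_pos hl.2 hl'.2 (getD_eq_of_phi_eq (by omega) (by omega) hmm')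
  · rintro _ ⟨v, hv, rfl⟩
    obtain ⟨l, hl, hlen, hphi⟩ := hv.exists_phi_eq
    exact ⟨l, hl, (cls_phi_of_length_lt hlen).symm.trans (congrArg cls hphi)⟩
end

section
/- For any partition γ in D₁ = {γ : γ_1 ≤ ℓ(γ)+2}, the partition NU₁(γ) = (ℓ(γ)+1, γ_1-1, ..., γ_ℓ-1) satisfies |NU₁(γ)| = |γ| + 1, defc(NU₁(γ)) = defc(γ), and dinv(NU₁(γ)) = dinv(γ) + 1. -/
/-! `NU₁` deletes the first column of `γ` (`ℓ` cells) and adds a new first row of `ℓ + 1` cells;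
every other cell keeps its arm and leg, so only these two lines change `dinv`. Writing `γ'` for
the conjugate, the first-column cell of row `i` counts iff `γᵢ + i ∈ {ℓ, ℓ+1}`, and the new-row cell
of column `j` iff `γ'_{j+2} + j ∈ {ℓ-1, ℓ}`. Both are differences of threshold indicators
`[k ≤ γ'_d + d]` for `k = ℓ+1, ℓ+3`, taken at `d = ℓ-i, ℓ+2-i` for the column and at `d = j+2` for
the row, so the two sums telescope; what survives is `1 + 1 - 1 - 0`. -/

theorem List.le_headD_of_pairwise_ge {l : List ℕ} (hs : l.Pairwise (· ≥ ·)) {x : ℕ}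
    (hx : x ∈ l) : x ≤ l.headD 0 := by
  cases l with
  | nil => simp at hx
  | cons a t =>
    rcases List.mem_cons.1 hx with rfl | hx
    · exact le_rfl
    · exact (List.pairwise_cons.1 hs).1 x hx

theorem List.getD_filter_pos {l : List ℕ} (hs : l.Pairwise (· ≥ ·)) (i : ℕ) :
    (l.filter (fun x => 0 < x)).getD i 0 = l.getD i 0 := by
  induction l generalizing i with
  | nil => rfl
  | cons a t ih =>
    rw [List.pairwise_cons] at hs
    rcases Nat.eq_zero_or_pos a with rfl | ha
    · have hnil : t.filter (fun x => 0 < x) = [] :=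
        List.filter_eq_nil_iff.2 fun x hx => by simpa using hs.1 x hx
      rw [List.filter_cons_of_neg (by simp), hnil]
      cases i with
      | zero => rfl
      | succ i => rw [List.getD_cons_succ, ← ih hs.2 i, hnil]; rfl
    · rw [List.filter_cons_of_pos (by simpa using ha)]
      cases i with
      | zero => rfl
      | succ i => rw [List.getD_cons_succ, List.getD_cons_succ, ih hs.2]

/-- For `c ≥ 1` this is the `c`-th part of the conjugate partition. -/
def partsGe (l : List ℕ) (c : ℕ) : ℕ := (l.filter (fun x => c ≤ x)).length

section partsGe

variable (l : List ℕ)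

theorem partsGe_cons (a c : ℕ) :
    partsGe (a :: l) c = (if c ≤ a then 1 else 0) + partsGe l c := by
  by_cases h : c ≤ a <;> simp [partsGe, h, add_comm]

theorem partsGe_le_length (c : ℕ) : partsGe l c ≤ l.length :=
  List.length_filter_le _ _

theorem partsGe_antitone {c d : ℕ} (h : c ≤ d) : partsGe l d ≤ partsGe l c :=
  (List.Sublist.length_le (List.monotone_filter_right l fun x hx => by
    simp only [decide_eq_true_eq] at hx ⊢; omega))

theorem partsGe_one (hpos : ∀ x ∈ l, 0 < x) : partsGe l 1 = l.length := by
  rw [partsGe, List.filter_eq_self.2 fun x hx => decide_eq_true (show 1 ≤ x from hpos x hx)]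

variable {l}

theorem le_getD_iff_lt_partsGe (hs : l.Pairwise (· ≥ ·)) {c : ℕ} (hc : 1 ≤ c) (i : ℕ) :
    c ≤ l.getD i 0 ↔ i < partsGe l c := by
  induction l generalizing i with
  | nil => simp [partsGe]; omega
  | cons a t ih =>
    rw [List.pairwise_cons] at hs
    have htail : c ≤ a ∨ partsGe t c = 0 := by
      by_contra! h
      obtain ⟨x, hx, hcx⟩ : ∃ x ∈ t, c ≤ x := by
        simpa [partsGe, List.filter_eq_nil_iff] using h.2
      exact h.1.not_ge (hcx.trans (hs.1 x hx))
    cases i with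
    | zero => by_cases h : c ≤ a <;> simp [partsGe_cons, h] at htail ⊢; omega
    | succ i =>
      rw [List.getD_cons_succ, ih hs.2, partsGe_cons]
      by_cases h : c ≤ a <;> simp [h] at htail ⊢ <;> omega

theorem partsGe_eq_zero (hs : l.Pairwise (· ≥ ·)) {c : ℕ} (hc : l.headD 0 < c) :
    partsGe l c = 0 := by
  by_contra h
  have hle := (le_getD_iff_lt_partsGe hs (c := c) (by omega) 0).2 (Nat.pos_of_ne_zero h)
  cases l <;> simp_all; omega

end partsGe

open Finset

/-- The indicator of `arm - leg ∈ {0, 1}` at cell `(i, j)`, with arm `l_i - 1 - j` and leg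
`l'_{j+1} - 1 - i` (`l'` the conjugate partition), written without truncated subtraction. -/
def dinvInd (l : List ℕ) (i j : ℕ) : ℕ :=
  if i < partsGe l (j + 1) ∧
      (l.getD i 0 + i = partsGe l (j + 1) + j ∨ l.getD i 0 + i = partsGe l (j + 1) + j + 1)
  then 1 else 0

def dinvSum (l : List ℕ) : ℕ :=
  ∑ i ∈ range l.length, ∑ j ∈ range (l.headD 0), dinvInd l i j

section dinvSum

variable {l : List ℕ}

theorem card_leg (hs : l.Pairwise (· ≥ ·)) (i : Fin l.length) (j : ℕ) :
    #{i' : Fin l.length | (i : ℕ) < i' ∧ j < l.get i'} = partsGe l (j + 1) - (i + 1) := by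
  have hleg : #{i' : Fin l.length | (i : ℕ) < i' ∧ j < l.get i'}
      = #{i' : Fin l.length | (i : ℕ) < i' ∧ (i' : ℕ) < partsGe l (j + 1)} := by
    congr 1
    refine filter_congr fun i' _ => and_congr_right fun _ => ?_
    rw [← le_getD_iff_lt_partsGe hs le_add_self, List.getD_eq_getElem _ _ i'.isLt]
    simp
  rw [hleg, ← card_map Fin.valEmbedding, map_filter', Fin.map_valEmbedding_univ,
    Nat.sub_add_eq, ← Nat.card_Ioo]
  congr 1
  ext x
  have := partsGe_le_length l (j + 1)
  simp only [mem_filter, mem_Iio, mem_Ioo, Fin.valEmbedding_apply]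
  constructor
  · rintro ⟨_, y, hy, rfl⟩; exact hy
  · rintro ⟨h1, h2⟩; exact ⟨by omega, ⟨x, by omega⟩, ⟨h1, h2⟩, rfl⟩

theorem pdinv_eq_dinvSum (hs : l.Pairwise (· ≥ ·)) : pdinv l = dinvSum l := by
  rw [pdinv, card_filter, Fintype.sum_prod_type, dinvSum, ← Fin.sum_univ_eq_sum_range]
  refine sum_congr rfl fun i _ => ?_
  rw [← Fin.sum_univ_eq_sum_range]
  refine sum_congr rfl fun j _ => ?_
  dsimp only
  have hcol := le_getD_iff_lt_partsGe hs (c := j + 1) le_add_self i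
  rw [List.getD_eq_getElem _ _ i.isLt] at hcol
  rw [card_leg hs, dinvInd, List.getD_eq_getElem _ _ i.isLt, List.get_eq_getElem]
  split_ifs <;> omega

theorem dinvSum_eq_sum_range (hs : l.Pairwise (· ≥ ·)) {m n : ℕ} (hm : l.length ≤ m)
    (hn : l.headD 0 ≤ n) : dinvSum l = ∑ i ∈ range m, ∑ j ∈ range n, dinvInd l i j := by
  rw [dinvSum, ← sum_product', ← sum_product']
  refine sum_subset (product_subset_product (range_subset_range.2 hm)
    (range_subset_range.2 hn)) fun ⟨i, j⟩ _ hij => if_neg ?_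
  rintro ⟨hi, -⟩
  dsimp only at hi
  simp only [mem_product, mem_range, not_and_or, not_lt] at hij
  rcases hij with hi' | hj
  · exact absurd (partsGe_le_length l (j + 1)) (by omega)
  · rw [partsGe_eq_zero hs (by omega)] at hi; omega

end dinvSum

def dropFirstColumn (g : List ℕ) : List ℕ := (g.map (· - 1)).filter (fun x => 0 < x)

section dropFirstColumn

variable {g : List ℕ}

theorem nuOne_eq_cons (g : List ℕ) : nuOne g = (g.length + 1) :: dropFirstColumn g := rfl

theorem pos_of_mem_dropFirstColumn {x : ℕ} (hx : x ∈ dropFirstColumn g) : 0 < x := by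
  simpa using (List.mem_filter.1 hx).2

theorem pairwise_map_sub_one (hs : g.Pairwise (· ≥ ·)) : (g.map (· - 1)).Pairwise (· ≥ ·) :=
  List.pairwise_map.2 (hs.imp fun h => Nat.sub_le_sub_right h 1)

theorem pairwise_dropFirstColumn (hs : g.Pairwise (· ≥ ·)) :
    (dropFirstColumn g).Pairwise (· ≥ ·) :=
  (pairwise_map_sub_one hs).filter _

theorem getD_dropFirstColumn (hs : g.Pairwise (· ≥ ·)) (i : ℕ) :
    (dropFirstColumn g).getD i 0 = g.getD i 0 - 1 := by
  rw [dropFirstColumn, List.getD_filter_pos (pairwise_map_sub_one hs)]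
  exact List.getD_map g 0 (· - 1)

theorem partsGe_dropFirstColumn {c : ℕ} (hc : 1 ≤ c) :
    partsGe (dropFirstColumn g) c = partsGe g (c + 1) := by
  rw [partsGe, partsGe, dropFirstColumn, List.filter_filter, List.filter_map, List.length_map]
  congr 1
  refine List.filter_congr fun x _ => ?_
  rw [Bool.eq_iff_iff]
  simp only [Function.comp_apply, Bool.and_eq_true, decide_eq_true_eq]
  omega

theorem length_dropFirstColumn : (dropFirstColumn g).length = partsGe g 2 := by
  rw [← partsGe_one _ fun _ => pos_of_mem_dropFirstColumn, partsGe_dropFirstColumn le_rfl]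

theorem sum_dropFirstColumn_add_length (hpos : ∀ x ∈ g, 0 < x) :
    (dropFirstColumn g).sum + g.length = g.sum := by
  induction g with
  | nil => rfl
  | cons a t ih =>
    have ha := hpos a List.mem_cons_self
    have ht := ih fun x hx => hpos x (List.mem_cons_of_mem a hx)
    rcases Nat.lt_or_ge 1 a with h | h
    · simp [dropFirstColumn, h] at ht ⊢; omega
    · simp [dropFirstColumn, Nat.sub_eq_zero_of_le h] at ht ⊢; omega

end dropFirstColumn

section nuOne

variable {g : List ℕ}

theorem nuOne_pairwise_ge (hs : g.Pairwise (· ≥ ·)) (hD : g.headD 0 ≤ g.length + 2) :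
    (nuOne g).Pairwise (· ≥ ·) := by
  refine List.pairwise_cons.2 ⟨fun x hx => ?_, pairwise_dropFirstColumn hs⟩
  obtain ⟨y, hy, rfl⟩ := List.mem_map.1 (List.mem_filter.1 hx).1
  have := List.le_headD_of_pairwise_ge hs hy
  omega

theorem length_nuOne : (nuOne g).length = partsGe g 2 + 1 := by
  rw [nuOne_eq_cons, List.length_cons, length_dropFirstColumn]

theorem sum_nuOne (hpos : ∀ x ∈ g, 0 < x) : (nuOne g).sum = g.sum + 1 := by
  rw [nuOne_eq_cons, List.sum_cons, ← sum_dropFirstColumn_add_length hpos]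
  omega

theorem partsGe_nuOne {c : ℕ} (hc : 1 ≤ c) (hcl : c ≤ g.length + 1) :
    partsGe (nuOne g) c = partsGe g (c + 1) + 1 := by
  rw [nuOne_eq_cons, partsGe_cons, if_pos hcl, partsGe_dropFirstColumn hc, add_comm]

theorem dinvInd_nuOne_succ (hs : g.Pairwise (· ≥ ·)) (i : ℕ) {j : ℕ} (hj : j ≤ g.length) :
    dinvInd (nuOne g) (i + 1) j = dinvInd g i (j + 1) := by
  have hrow := le_getD_iff_lt_partsGe hs (c := j + 1 + 1) (by omega) i
  rw [dinvInd, dinvInd, partsGe_nuOne (by omega) (by omega), nuOne_eq_cons,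
    List.getD_cons_succ, getD_dropFirstColumn hs]
  split_ifs <;> omega

def colReaches (g : List ℕ) (k d : ℕ) : ℕ := if k ≤ partsGe g d + d then 1 else 0

theorem dinvInd_col_zero (hs : g.Pairwise (· ≥ ·)) (hpos : ∀ x ∈ g, 0 < x) {i : ℕ}
    (hi : i < g.length) :
    dinvInd g i 0 + colReaches g (g.length + 3) (g.length + 2 - i)
      = colReaches g (g.length + 1) (g.length - i) := by
  have h₁ := le_getD_iff_lt_partsGe hs (c := g.length - i) (by omega) i
  have h₂ := le_getD_iff_lt_partsGe hs (c := g.length + 2 - i) (by omega) i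
  have hanti := partsGe_antitone g (show g.length - i ≤ g.length + 2 - i by omega)
  rw [dinvInd, colReaches, colReaches, partsGe_one g hpos]
  split_ifs <;> omega

theorem dinvInd_nuOne_zero (j : ℕ) (hj : j ≤ g.length) :
    dinvInd (nuOne g) 0 j + colReaches g (g.length + 3) (j + 2)
      = colReaches g (g.length + 1) (j + 2) := by
  rw [dinvInd, colReaches, colReaches, partsGe_nuOne (by omega) (by omega),
    show j + 1 + 1 = j + 2 from rfl]
  simp only [nuOne_eq_cons, List.getD_cons_zero]
  split_ifs <;> omega

theorem sum_dinvInd_nuOne_zero (hs : g.Pairwise (· ≥ ·)) (hpos : ∀ x ∈ g, 0 < x) :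
    ∑ j ∈ range (g.length + 1), dinvInd (nuOne g) 0 j
      = ∑ i ∈ range g.length, dinvInd g i 0 + 1 := by
  set n := g.length
  have hcol : ∑ i ∈ range n, dinvInd g i 0 + ∑ d ∈ range n, colReaches g (n + 3) (d + 3)
      = ∑ d ∈ range n, colReaches g (n + 1) (d + 1) := by
    rw [← sum_range_reflect (fun d => colReaches g (n + 3) (d + 3)),
      ← sum_range_reflect (fun d => colReaches g (n + 1) (d + 1)), ← sum_add_distrib]
    refine sum_congr rfl fun i hi => ?_
    have hi := mem_range.1 hi
    rw [show n - 1 - i + 3 = n + 2 - i by omega, show n - 1 - i + 1 = n - i by omega]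
    exact dinvInd_col_zero hs hpos hi
  have hrow : ∑ j ∈ range (n + 1), dinvInd (nuOne g) 0 j
        + ∑ j ∈ range (n + 1), colReaches g (n + 3) (j + 2)
      = ∑ j ∈ range (n + 1), colReaches g (n + 1) (j + 2) := by
    rw [← sum_add_distrib]
    exact sum_congr rfl fun j hj => dinvInd_nuOne_zero j (Nat.lt_succ_iff.1 (mem_range.1 hj))
  have hshiftR : ∑ j ∈ range (n + 1), colReaches g (n + 3) (j + 2)
      = ∑ d ∈ range n, colReaches g (n + 3) (d + 3) + colReaches g (n + 3) 2 :=
    sum_range_succ' _ _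
  have hshift : ∑ j ∈ range (n + 1), colReaches g (n + 1) (j + 2) + colReaches g (n + 1) 1
      = ∑ d ∈ range n, colReaches g (n + 1) (d + 1)
        + colReaches g (n + 1) (n + 1) + colReaches g (n + 1) (n + 2) := by
    rw [← sum_range_succ, ← sum_range_succ, sum_range_succ' _ (n + 1)]
  have h₂ : colReaches g (n + 3) 2 = 0 := if_neg (by have := partsGe_le_length g 2; omega)
  have h₁ : colReaches g (n + 1) 1 = 1 := if_pos (by rw [partsGe_one g hpos])
  have hn₁ : colReaches g (n + 1) (n + 1) = 1 := if_pos (by omega)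
  have hn₂ : colReaches g (n + 1) (n + 2) = 1 := if_pos (by omega)
  omega

theorem dinvSum_nuOne (hs : g.Pairwise (· ≥ ·)) (hpos : ∀ x ∈ g, 0 < x)
    (hD : g.headD 0 ≤ g.length + 2) : dinvSum (nuOne g) = dinvSum g + 1 := by
  have hlen : (nuOne g).length ≤ g.length + 1 := by
    rw [length_nuOne]; exact Nat.succ_le_succ (partsGe_le_length g 2)
  calc dinvSum (nuOne g)
      = ∑ i ∈ range (g.length + 1), ∑ j ∈ range (g.length + 1), dinvInd (nuOne g) i j :=
        dinvSum_eq_sum_range (nuOne_pairwise_ge hs hD) hlen le_rfl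
    _ = ∑ i ∈ range g.length, ∑ j ∈ range (g.length + 1), dinvInd g i (j + 1)
          + ∑ j ∈ range (g.length + 1), dinvInd (nuOne g) 0 j := by
        rw [sum_range_succ']
        congr 1
        refine sum_congr rfl fun i _ => sum_congr rfl fun j hj => ?_
        exact dinvInd_nuOne_succ hs i (Nat.lt_succ_iff.1 (mem_range.1 hj))
    _ = ∑ i ∈ range g.length, ∑ j ∈ range (g.length + 2), dinvInd g i j + 1 := by
        rw [sum_dinvInd_nuOne_zero hs hpos, ← add_assoc, ← sum_add_distrib]
        simp only [sum_range_succ' (fun j => dinvInd g _ j) (g.length + 1)]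
    _ = dinvSum g + 1 := by rw [dinvSum_eq_sum_range hs le_rfl hD]

end nuOne

theorem stmt9 (g : List ℕ) (hg : IsPartitionList g) (hD : g.headD 0 ≤ g.length + 2) :
    (nuOne g).sum = g.sum + 1 ∧
    pdinv (nuOne g) = pdinv g + 1 ∧
    ((nuOne g).sum : ℤ) - (pdinv (nuOne g) : ℤ) = (g.sum : ℤ) - (pdinv g : ℤ) := by
  obtain ⟨hs, hpos⟩ := hg
  have hsum : (nuOne g).sum = g.sum + 1 := sum_nuOne hpos
  have hdinv : pdinv (nuOne g) = pdinv g + 1 := by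
    rw [pdinv_eq_dinvSum (nuOne_pairwise_ge hs hD), pdinv_eq_dinvSum hs, dinvSum_nuOne hs hpos hD]
  refine ⟨hsum, hdinv, ?_⟩
  rw [hsum, hdinv]
  push_cast
  ring
end

section
/- For any nonzero partition μ, the Dyck class [0 B_μ] is a NU₁-initial object: there is no Dyck class δ in the domain of NU₁ with NU₁(δ) = [0 B_μ]. Equivalently, the partition corresponding to [0 B_μ] has largest part strictly less than its number of parts. -/
/-!
The quantity `lastSubLeader v = v_last - leader v` is an invariant of Dyck classes: the
shift `v ↦ 0 v⁺` generating the equivalence raises both the last entry and the leader by one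
(for vectors starting with `0`). On `0 B_μ` it equals `1`, since the leader is `0` and `B_μ`
ends in `1` because `n_r > 0`. On the other hand NU₁ deletes the leader symbol `v_d` and
appends `d - 1`; the prefix `0, 1, …, d - 1` survives, so the leader of the result is at
least `d - 1` and the invariant is at most `0`.
-/

theorem Relation.EqvGen.exists_iterate_eq_iterate {α : Type*} {f : α → α} {x y : α}
    (h : Relation.EqvGen (fun a b => b = f a) x y) : ∃ m n, f^[m] x = f^[n] y := by
  induction h with
  | rel a b hab => exact ⟨1, 0, hab.symm⟩
  | refl a => exact ⟨0, 0, rfl⟩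
  | symm a b _ ih =>
    obtain ⟨m, n, h⟩ := ih
    exact ⟨n, m, h.symm⟩
  | trans a b c _ _ ih₁ ih₂ =>
    obtain ⟨m₁, n₁, h₁⟩ := ih₁
    obtain ⟨m₂, n₂, h₂⟩ := ih₂
    refine ⟨m₂ + m₁, n₁ + n₂, ?_⟩
    rw [Function.iterate_add_apply, h₁, ← Function.iterate_add_apply, Nat.add_comm m₂ n₁,
      Function.iterate_add_apply, h₂, ← Function.iterate_add_apply]

theorem Set.MapsTo.iterate_invariant {α β : Type*} {f : α → α} {g : α → β} {s : Set α}
    (hf : Set.MapsTo f s s) (h : Set.EqOn (g ∘ f) g s) (n : ℕ) : Set.EqOn (g ∘ f^[n]) g s := by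
  induction n with
  | zero => exact fun _ _ => rfl
  | succ n ih => exact fun a ha => (ih (hf ha)).trans (h ha)

/-- `stepRel v w` is `w = dyckShift v`, so Dyck classes are the classes generated by
`dyckShift`. -/
def dyckShift (v : List ℤ) : List ℤ := 0 :: v.map (· + 1)

theorem head?_dyckShift (v : List ℤ) : (dyckShift v).head? = some 0 := rfl

theorem eq_of_cls_eq_of_dyckShift_invariant {β : Type*} {g : List ℤ → β}
    (hg : Set.EqOn (g ∘ dyckShift) g {v | v.head? = some 0}) {x y : List ℤ}
    (hx : x.head? = some 0) (hy : y.head? = some 0) (h : cls x = cls y) : g x = g y := by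
  obtain ⟨m, n, hmn⟩ := Relation.EqvGen.exists_iterate_eq_iterate (Quotient.exact h)
  have hf : Set.MapsTo dyckShift {v | v.head? = some 0} {v | v.head? = some 0} :=
    fun v _ => head?_dyckShift v
  rw [← hf.iterate_invariant hg m hx, ← hf.iterate_invariant hg n hy]
  exact congrArg g hmn

section DyckVector

variable {v : List ℤ}

theorem leader_le_length_sub_one (v : List ℤ) : leader v ≤ v.length - 1 :=
  Nat.findGreatest_le _

theorem getD_zero_of_head? (hv : v.head? = some 0) : v.getD 0 0 = 0 := by
  cases v <;> simp_all

theorem getD_of_le_leader (hv : v.head? = some 0) {i : ℕ} (hi : i ≤ leader v) :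
    v.getD i 0 = i := by
  refine Nat.findGreatest_spec (P := fun d => ∀ i ≤ d, v.getD i 0 = i) (Nat.zero_le _)
    (fun j hj => ?_) i hi
  obtain rfl : j = 0 := by omega
  exact getD_zero_of_head? hv

theorem getD_of_le_leader_of_ne_zero (h : leader v ≠ 0) {i : ℕ} (hi : i ≤ leader v) :
    v.getD i 0 = i :=
  Nat.findGreatest_of_ne_zero (m := leader v) (P := fun d => ∀ i ≤ d, v.getD i 0 = i) rfl h i hi

theorem le_leader {d : ℕ} (hd : d < v.length) (h : ∀ i ≤ d, v.getD i 0 = i) : d ≤ leader v :=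
  Nat.le_findGreatest (by omega) h

theorem leader_eq_zero (h : v.getD 1 0 ≠ 1) : leader v = 0 := by
  by_contra hne
  exact h (by exact_mod_cast getD_of_le_leader_of_ne_zero hne (i := 1) (by omega))

theorem getD_dyckShift_succ {j : ℕ} (hj : j < v.length) :
    (dyckShift v).getD (j + 1) 0 = v.getD j 0 + 1 := by
  simp [dyckShift, List.getElem?_eq_getElem hj]

theorem leader_dyckShift (hv : v.head? = some 0) : leader (dyckShift v) = leader v + 1 := by
  have hv₀ : 0 < v.length := by cases v <;> simp_all
  have hlen : (dyckShift v).length = v.length + 1 := by simp [dyckShift]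
  have hle := leader_le_length_sub_one (dyckShift v)
  refine le_antisymm ?_ (le_leader (by have := leader_le_length_sub_one v; omega) ?_)
  · rcases Nat.eq_zero_or_pos (leader (dyckShift v)) with h | h
    · omega
    suffices leader (dyckShift v) - 1 ≤ leader v by omega
    refine le_leader (by omega) fun i hi => ?_
    have := getD_of_le_leader_of_ne_zero (v := dyckShift v) (i := i + 1) h.ne' (by omega)
    rw [getD_dyckShift_succ (by omega)] at this
    push_cast at this
    linarith
  · rintro (_ | i) hi
    · rfl
    · rw [getD_dyckShift_succ (by have := leader_le_length_sub_one v; omega),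
        getD_of_le_leader hv (by omega)]
      push_cast
      ring

theorem getLastD_dyckShift (hv : v ≠ []) : (dyckShift v).getLastD 0 = v.getLastD 0 + 1 := by
  obtain ⟨L, b, rfl⟩ := (List.eq_nil_or_concat' v).resolve_left hv
  rw [dyckShift, List.map_append, List.map_singleton, ← List.cons_append, List.getLastD_concat,
    List.getLastD_concat]

theorem length_nuStep (hv : v ≠ []) : (nuStep v).length = v.length := by
  have := leader_le_length_sub_one v
  have := List.length_pos_of_ne_nil hv
  simp only [nuStep, List.length_append, List.length_take, List.length_drop, List.length_singleton]
  omega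

theorem getLastD_nuStep (v : List ℤ) : (nuStep v).getLastD 0 = leader v - 1 :=
  List.getLastD_concat

theorem sub_one_le_leader_nuStep (v : List ℤ) : leader v - 1 ≤ leader (nuStep v) := by
  rcases Nat.eq_zero_or_pos (leader v) with h | h
  · omega
  have hlen := leader_le_length_sub_one v
  have hv : v ≠ [] := by rintro rfl; simp at hlen; omega
  refine le_leader (by rw [length_nuStep hv]; omega) fun i hi => ?_
  rw [nuStep, List.append_assoc, List.getD_append _ _ _ _ (by simp; omega)]
  simp only [List.getD_eq_getElem?_getD, List.getElem?_take, show i < leader v by omega, if_true]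
  rw [← List.getD_eq_getElem?_getD]
  exact getD_of_le_leader_of_ne_zero h.ne' (by omega)

theorem head?_nuStep (hv : IsQDV v) (hlen : 2 ≤ v.length) (hv₁ : 0 ≤ v.getD 1 0) :
    (nuStep v).head? = some 0 := by
  obtain ⟨hhead, hstep⟩ := hv
  rcases Nat.eq_zero_or_pos (leader v) with h | h
  · have hne : v.getD 1 0 ≠ 1 := fun h₁ => by
      have := le_leader (v := v) (d := 1) (by omega) fun i hi => by
        interval_cases i
        · exact getD_zero_of_head? hhead
        · exact h₁
      omega
    have : v.getD 1 0 ≤ v.getD 0 0 + 1 := hstep 0 (by omega)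
    rw [getD_zero_of_head? hhead] at this
    have h₁ : v.getD 1 0 = 0 := by omega
    have h₁' : v[1]? = some 0 := by
      rw [← h₁, List.getD_eq_getElem _ _ (by omega), List.getElem?_eq_getElem (by omega)]
    simp [nuStep, h, List.head?_append, h₁']
  · simp [nuStep, List.head?_append, List.head?_take, h.ne', hhead]

end DyckVector

def lastSubLeader (v : List ℤ) : ℤ := v.getLastD 0 - leader v

theorem lastSubLeader_dyckShift :
    Set.EqOn (lastSubLeader ∘ dyckShift) lastSubLeader {v | v.head? = some 0} := by
  intro v hv
  have hne : v ≠ [] := by rintro rfl; simp at hv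
  simp only [Function.comp_apply, lastSubLeader, leader_dyckShift hv, getLastD_dyckShift hne]
  push_cast
  ring

theorem lastSubLeader_nuStep_nonpos (v : List ℤ) : lastSubLeader (nuStep v) ≤ 0 := by
  have := sub_one_le_leader_nuStep v
  rw [lastSubLeader, getLastD_nuStep]
  omega

theorem getLast?_bWord {ns : List ℕ} (hlast : 0 < ns.getLastD 0) :
    (bWord ns).getLast? = some 1 := by
  obtain ⟨init, m, rfl⟩ := (List.eq_nil_or_concat' ns).resolve_left (by rintro rfl; simp at hlast)
  rw [List.getLastD_concat] at hlast
  obtain ⟨k, rfl⟩ := Nat.exists_eq_add_one_of_ne_zero hlast.ne'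
  simp only [bWord, List.map_append, List.map_singleton, List.flatten_append,
    List.flatten_singleton, List.replicate_succ', ← List.cons_append]
  rw [← List.append_assoc, List.getLast?_concat]

theorem lastSubLeader_zero_cons_bWord {ns : List ℕ} (hlast : 0 < ns.getLastD 0) :
    lastSubLeader (0 :: bWord ns) = 1 := by
  obtain ⟨m, ms, rfl⟩ := List.exists_cons_of_ne_nil (l := ns) (by rintro rfl; simp at hlast)
  have hleader : leader (0 :: bWord (m :: ms)) = 0 := leader_eq_zero (by simp [bWord])
  rw [lastSubLeader, hleader, List.getLastD_cons, List.getLastD_eq_getLast?,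
    getLast?_bWord hlast]
  rfl

theorem stmt12_general (ns : List ℕ) (hlast : 0 < ns.getLastD 0) :
    ∀ c : DyckClass, ¬ nuClassRel c (cls ((0:ℤ) :: bWord ns)) := by
  rintro c ⟨v, ⟨hqdv, hlen, hv₁, -⟩, -, hcls⟩
  have h := eq_of_cls_eq_of_dyckShift_invariant lastSubLeader_dyckShift rfl
    (head?_nuStep hqdv hlen hv₁) hcls
  rw [lastSubLeader_zero_cons_bWord hlast] at h
  have := lastSubLeader_nuStep_nonpos v
  omega

theorem stmt12 (ns : List ℕ) (hne : ns ≠ []) (hlast : 0 < ns.getLastD 0) :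
    ∀ c : DyckClass, ¬ nuClassRel c (cls ((0:ℤ) :: bWord ns)) :=
  stmt12_general ns hlast
end
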